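/- Integration by parts for the normalized variables: let 0 < u_- < u_+ < 1. There exists C = C_{u_-,u_+} > 0 such that the following holds. Let ν = ν_{u(·)} be the product Bernoulli measure with means u, let x, y ∈ T_N^d with |x−y| = 1 and u_x, u_y ∈ [u_-,u_+], let h satisfy h(η^{x,y}) = h(η) for all η, and let f be a probability density with respect to ν. Then ∫ h (ω_y − ω_x) f dν = ∫ h(η) (η_x/χ(u_x)) ( f(η^{x,y}) − f(η) ) dν + R₂ with |R₂| ≤ C |u_x − u_y| ∫ |h| f dν, where ω_z = (η_z − u_z)/χ(u_z) and χ(ρ) = ρ(1−ρ). -/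

import Mathlib

/-!
Reindexing the `f(η^{x,y})` term by the involution `η ↦ η^{x,y}`, which fixes `h`, turns it into
an integral against `ν(η^{x,y})`, and `ν(η^{x,y}) / ν(η)` only involves `η_x, η_y, u_x, u_y`.
So the difference of the two sides is `∫ h f V(u_x, u_y, η_x, η_y) dν` for an explicit `V`, and
evaluating `V` at the four values of `(η_x, η_y)` shows `V = (u_x - u_y) · c` with `c` bounded
in terms of `u_-, u_+` alone.
-/


open Finset

/-- The discrete torus `T_N^d = (ℤ/Nℤ)^d`. -/
abbrev Torus (d N : ℕ) := Fin d → ZMod N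

/-- The configuration space `X_N = {0,1}^{T_N^d}`. -/
abbrev Config (d N : ℕ) := Torus d N → Bool

/-- The value in `{0,1} ⊂ ℝ` of an occupation variable. -/
noncomputable def bval : Bool → ℝ := fun b => if b then 1 else 0

/-- The `i`-th unit vector `e_i` of the discrete torus. -/
def uvec (d N : ℕ) (i : Fin d) : Torus d N := fun j => if j = i then 1 else 0

/-- `swapC x y η = η^{x,y}`, the configuration with the values at `x` and `y` exchanged. -/
def swapC {d N : ℕ} (x y : Torus d N) (η : Config d N) : Config d N :=
  fun z => η (Equiv.swap x y z)

/-- The product Bernoulli measure with means `u`. -/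
noncomputable def bern {d N : ℕ} [NeZero N] (u : Torus d N → ℝ) (η : Config d N) : ℝ :=
  ∏ x : Torus d N, (if η x then u x else 1 - u x)


/-- `χ(ρ) = ρ(1-ρ)`. -/
noncomputable def chi (ρ : ℝ) : ℝ := ρ * (1 - ρ)

/-- `ω_z = (η_z - u_z)/χ(u_z)`. -/
noncomputable def omg {d N : ℕ} (u : Torus d N → ℝ) (z : Torus d N) (η : Config d N) : ℝ :=
  (bval (η z) - u z) / chi (u z)

section Swap

variable {d N : ℕ} (x y : Torus d N)

@[simp]
theorem swapC_apply_left (η : Config d N) : swapC x y η x = η y := by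
  simp [swapC]

@[simp]
theorem swapC_apply_right (η : Config d N) : swapC x y η y = η x := by
  simp [swapC]

theorem swapC_apply_of_ne {z : Torus d N} (hx : z ≠ x) (hy : z ≠ y) (η : Config d N) :
    swapC x y η z = η z := by
  simp [swapC, Equiv.swap_apply_of_ne_of_ne hx hy]

@[simp]
theorem swapC_self (η : Config d N) : swapC x x η = η := by
  funext z
  simp [swapC]

theorem swapC_involutive : Function.Involutive (swapC x y) := by
  intro η
  funext z
  simp [swapC]

theorem sum_comp_swapC [NeZero N] (F : Config d N → ℝ) :
    ∑ η, F (swapC x y η) = ∑ η, F η :=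
  Equiv.sum_comp (swapC_involutive x y).toPerm F

end Swap

section Bernoulli

noncomputable def bernFactor (ρ : ℝ) (c : Bool) : ℝ := if c then ρ else 1 - ρ

theorem bernFactor_pos {ρ : ℝ} (hρ : ρ ∈ Set.Ioo 0 1) (c : Bool) : 0 < bernFactor ρ c := by
  cases c <;> simp [bernFactor] <;> linarith [hρ.1, hρ.2]

theorem bernFactor_nonneg {ρ : ℝ} (hρ : ρ ∈ Set.Icc 0 1) (c : Bool) : 0 ≤ bernFactor ρ c := by
  cases c <;> simp [bernFactor] <;> linarith [hρ.1, hρ.2]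

variable {d N : ℕ} [NeZero N] (u : Torus d N → ℝ)

theorem bern_eq_prod (η : Config d N) : bern u η = ∏ z, bernFactor (u z) (η z) := rfl

theorem bern_nonneg (hu : ∀ z, u z ∈ Set.Icc 0 1) (η : Config d N) : 0 ≤ bern u η :=
  Finset.prod_nonneg fun z _ => bernFactor_nonneg (hu z) (η z)

theorem bern_eq_mul_prod_compl {x y : Torus d N} (hxy : x ≠ y) (η : Config d N) :
    bern u η = bernFactor (u x) (η x) * bernFactor (u y) (η y) *
      ∏ z ∈ {x, y}ᶜ, bernFactor (u z) (η z) := by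
  rw [bern_eq_prod, ← prod_mul_prod_compl {x, y}, prod_pair hxy]

theorem bern_swapC_mul {x y : Torus d N} (hxy : x ≠ y) (η : Config d N) :
    bern u (swapC x y η) * (bernFactor (u x) (η x) * bernFactor (u y) (η y)) =
      bern u η * (bernFactor (u x) (η y) * bernFactor (u y) (η x)) := by
  have hrest : ∏ z ∈ {x, y}ᶜ, bernFactor (u z) (swapC x y η z) =
      ∏ z ∈ {x, y}ᶜ, bernFactor (u z) (η z) := by
    refine prod_congr rfl fun z hz => ?_
    simp only [mem_compl, mem_insert, mem_singleton, not_or] at hz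
    rw [swapC_apply_of_ne x y hz.1 hz.2]
  rw [bern_eq_mul_prod_compl u hxy, bern_eq_mul_prod_compl u hxy, hrest,
    swapC_apply_left, swapC_apply_right]
  ring

theorem bern_swapC {x y : Torus d N} (hxy : x ≠ y) (hx : u x ∈ Set.Ioo 0 1)
    (hy : u y ∈ Set.Ioo 0 1) (η : Config d N) :
    bern u (swapC x y η) = bern u η *
      (bernFactor (u x) (η y) * bernFactor (u y) (η x) /
        (bernFactor (u x) (η x) * bernFactor (u y) (η y))) := by
  have hpos := mul_pos (bernFactor_pos hx (η x)) (bernFactor_pos hy (η y))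
  rw [← mul_div_assoc, eq_div_iff hpos.ne', bern_swapC_mul u hxy]

end Bernoulli

theorem abs_sum_mul_le_mul_sum_abs {ι : Type*} (s : Finset ι) (g r : ι → ℝ) {c : ℝ}
    (hr : ∀ i ∈ s, |r i| ≤ c) : |∑ i ∈ s, g i * r i| ≤ c * ∑ i ∈ s, |g i| := by
  rw [mul_sum]
  refine (abs_sum_le_sum_abs _ _).trans (sum_le_sum fun i hi => ?_)
  rw [abs_mul, mul_comm c]
  exact mul_le_mul_of_nonneg_left (hr i hi) (abs_nonneg _)

/-- The density of `R₂` with respect to `h f ν` at a configuration with `η_x = s`, `η_y = t`,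
when `u_x = a` and `u_y = b`; the last factor is `ν(η^{x,y}) / ν(η)`. -/
noncomputable def swapRemainder (a b : ℝ) (s t : Bool) : ℝ :=
  (bval t - b) / chi b - (bval s - a) / chi a + bval s / chi a
    - bval t / chi a * (bernFactor a t * bernFactor b s / (bernFactor a s * bernFactor b t))

theorem swapRemainder_eq {a b : ℝ} (ha : a ∈ Set.Ioo 0 1) (hb : b ∈ Set.Ioo 0 1) (s t : Bool) :
    swapRemainder a b s t = (a - b) *
      if t then (if s then 1 / (a * b) else -((2 - a) / ((1 - a) ^ 2 * b)))
      else 1 / ((1 - a) * (1 - b)) := by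
  have ha0 := ha.1.ne'
  have hb0 := hb.1.ne'
  have ha1 : 1 - a ≠ 0 := (sub_pos.2 ha.2).ne'
  have hb1 : 1 - b ≠ 0 := (sub_pos.2 hb.2).ne'
  cases s <;> cases t <;>
    simp only [swapRemainder, bernFactor, bval, chi, Bool.false_eq_true, ↓reduceIte] <;>
    field_simp <;> ring

theorem abs_swapRemainder_le {um up a b : ℝ} (h0m : 0 < um) (hp1 : up < 1)
    (ha : a ∈ Set.Icc um up) (hb : b ∈ Set.Icc um up) (s t : Bool) :
    |swapRemainder a b s t| ≤ 2 / (um ^ 2 * (1 - up) ^ 2) * |a - b| := by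
  obtain ⟨hma, hap⟩ := ha
  obtain ⟨hmb, hbp⟩ := hb
  have hq : 0 < 1 - up := by linarith
  have ha0 : 0 < a := by linarith
  have hb0 : 0 < b := by linarith
  have ha1 : 0 < 1 - a := by linarith
  have hb1 : 0 < 1 - b := by linarith
  have hm1 : um ^ 2 ≤ um := by nlinarith
  have hq1 : (1 - up) ^ 2 ≤ 1 := pow_le_one₀ hq.le (by linarith)
  have hK := mul_pos (pow_pos h0m 2) (pow_pos hq 2)
  rw [swapRemainder_eq ⟨ha0, by linarith⟩ ⟨hb0, by linarith⟩, abs_mul, mul_comm]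
  refine mul_le_mul_of_nonneg_right ?_ (abs_nonneg _)
  split_ifs
  · rw [abs_of_pos (by positivity), div_le_div_iff₀ (by positivity) hK]
    have : um ^ 2 ≤ a * b := by
      rw [sq]; exact mul_le_mul hma hmb h0m.le ha0.le
    nlinarith
  · rw [abs_neg, abs_of_pos (div_pos (by linarith) (by positivity)),
      div_le_div_iff₀ (by positivity) hK]
    have : um ^ 2 * (1 - up) ^ 2 ≤ b * (1 - a) ^ 2 :=
      mul_le_mul (by linarith) (pow_le_pow_left₀ hq.le (by linarith) 2) (by positivity) hb0.le
    nlinarith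
  · rw [abs_of_pos (by positivity), div_le_div_iff₀ (by positivity) hK]
    have : (1 - up) ^ 2 ≤ (1 - a) * (1 - b) := by
      rw [sq]; exact mul_le_mul (by linarith) (by linarith) hq.le ha1.le
    nlinarith

theorem sum_sub_sum_eq_sum_mul_swapRemainder {d N : ℕ} [NeZero N] {u : Torus d N → ℝ}
    {x y : Torus d N} (hxy : x ≠ y) (hx : u x ∈ Set.Ioo 0 1) (hy : u y ∈ Set.Ioo 0 1)
    {h : Config d N → ℝ} (hh : ∀ η, h (swapC x y η) = h η) (f : Config d N → ℝ) :
    (∑ η, h η * (omg u y η - omg u x η) * f η * bern u η)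
        - ∑ η, h η * (bval (η x) / chi (u x)) * (f (swapC x y η) - f η) * bern u η =
      ∑ η, h η * f η * bern u η * swapRemainder (u x) (u y) (η x) (η y) := by
  have hshift : ∑ η, h η * (bval (η x) / chi (u x)) * f (swapC x y η) * bern u η =
      ∑ η, h η * (bval (η y) / chi (u x)) * f η * bern u (swapC x y η) := by
    rw [← sum_comp_swapC x y]
    simp only [hh, swapC_apply_left, swapC_involutive x y _]
  simp only [mul_sub, sub_mul, sum_sub_distrib, hshift, bern_swapC u hxy hx hy]
  rw [← sum_sub_distrib, ← sum_sub_distrib, ← sum_sub_distrib]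
  refine sum_congr rfl fun η _ => ?_
  simp only [omg, swapRemainder]
  ring

theorem integration_by_parts_omega_general (um up : ℝ) (h0m : 0 < um) (hp1 : up < 1) :
    ∃ C : ℝ, 0 < C ∧
      ∀ (d N : ℕ) [NeZero N], 1 ≤ d →
      ∀ (u : Torus d N → ℝ), (∀ z, u z ∈ Set.Icc (0:ℝ) 1) →
      ∀ (x y : Torus d N), (∃ i : Fin d, y = x + uvec d N i ∨ y = x - uvec d N i) →
      u x ∈ Set.Icc um up → u y ∈ Set.Icc um up →
      ∀ (h : Config d N → ℝ), (∀ η, h (swapC x y η) = h η) →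
      ∀ (f : Config d N → ℝ), (∀ η, 0 ≤ f η) →
        (∑ η : Config d N, f η * bern u η = 1) →
        |(∑ η : Config d N, h η * (omg u y η - omg u x η) * f η * bern u η)
          - ∑ η : Config d N, h η * (bval (η x) / chi (u x)) * (f (swapC x y η) - f η) * bern u η|
          ≤ C * |u x - u y| * ∑ η : Config d N, |h η| * f η * bern u η := by
  have hq : 0 < 1 - up := by linarith
  refine ⟨2 / (um ^ 2 * (1 - up) ^ 2), by positivity, ?_⟩
  intro d N _ _ u hu x y _ hux huy h hh f hf _
  rcases eq_or_ne x y with rfl | hxy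
  · simp
  have hIoo : ∀ {z}, u z ∈ Set.Icc um up → u z ∈ Set.Ioo 0 1 :=
    fun hz => ⟨h0m.trans_le hz.1, hz.2.trans_lt hp1⟩
  rw [sum_sub_sum_eq_sum_mul_swapRemainder hxy (hIoo hux) (hIoo huy) hh f]
  calc _ ≤ 2 / (um ^ 2 * (1 - up) ^ 2) * |u x - u y| * ∑ η, |h η * f η * bern u η| :=
        abs_sum_mul_le_mul_sum_abs _ _ _ fun η _ => abs_swapRemainder_le h0m hp1 hux huy _ _
    _ = _ := by simp only [abs_mul, abs_of_nonneg (hf _), abs_of_nonneg (bern_nonneg u hu _)]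

/-- Lemma 3.4 (1) (Integration by parts for the normalized variables): there is
`C = C_{u_-,u_+} > 0` such that for every Bernoulli measure `ν = ν_{u(·)}`, every
nearest-neighbour pair `x,y` with `u_x, u_y ∈ [u_-,u_+]`, every swap-invariant `h` and every
probability density `f` w.r.t. `ν`,
`∫ h (ω_y - ω_x) f dν = ∫ h (η_x/χ(u_x)) (f(η^{x,y}) - f(η)) dν + R₂` with
`|R₂| ≤ C |u_x - u_y| ∫ |h| f dν`. -/
theorem integration_by_parts_omega (um up : ℝ) (h0m : 0 < um) (hmp : um < up) (hp1 : up < 1) :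
    ∃ C : ℝ, 0 < C ∧
      ∀ (d N : ℕ) [NeZero N], 1 ≤ d →
      ∀ (u : Torus d N → ℝ), (∀ z, u z ∈ Set.Icc (0:ℝ) 1) →
      ∀ (x y : Torus d N), (∃ i : Fin d, y = x + uvec d N i ∨ y = x - uvec d N i) →
      u x ∈ Set.Icc um up → u y ∈ Set.Icc um up →
      ∀ (h : Config d N → ℝ), (∀ η, h (swapC x y η) = h η) →
      ∀ (f : Config d N → ℝ), (∀ η, 0 ≤ f η) →
        (∑ η : Config d N, f η * bern u η = 1) →
        |(∑ η : Config d N, h η * (omg u y η - omg u x η) * f η * bern u η)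
          - ∑ η : Config d N, h η * (bval (η x) / chi (u x)) * (f (swapC x y η) - f η) * bern u η|
          ≤ C * |u x - u y| * ∑ η : Config d N, |h η| * f η * bern u η :=
  integration_by_parts_omega_general um up h0m hp1
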